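/- arXiv:2308.03439 — 2 statements merged into one kernel-verified Lean document; each statement's English description precedes it below -/
import Mathlib

section
/- Let O be a 2S×2S real orthogonal matrix and let e be any standard basis vector of ℝ^{2S}, say with its single nonzero entry 1 in position j. Then there exists a 2S×2S real orthogonal symplectic matrix W such that OW acts trivially on e: column j of OW equals e and row j of OW equals eᵀ. -/
open Matrix

/-- The standard symplectic form `Ω` on `2S` phase-space coordinates ordered
`(q₁,p₁,…,q_S,p_S)`: the direct sum of `S` copies of `[[0,1],[-1,0]]`. -/
def Omega (S : ℕ) : Matrix (Fin (2 * S)) (Fin (2 * S)) ℝ :=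
  Matrix.of fun i j =>
    if i.val + 1 = j.val ∧ i.val % 2 = 0 then (1 : ℝ)
    else if j.val + 1 = i.val ∧ j.val % 2 = 0 then -1 else 0

/-- A `2S × 2S` real matrix is orthogonal symplectic if `WᵀW = 1` and `WᵀΩW = Ω`. -/
def IsOrthoSymp (S : ℕ) (W : Matrix (Fin (2 * S)) (Fin (2 * S)) ℝ) : Prop :=
  Wᵀ * W = 1 ∧ Wᵀ * Omega S * W = Omega S

/-! Identify `ℝ^{2S}` with `ℂ^S` through `q_k + i p_k`. A complex matrix then becomes a real one
block by block, multiplicatively and turning `ᴴ` into `ᵀ`; multiplication by `-i` becomes `Ω`.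
Hence a unitary `U` gives an orthogonal `W` with `Wᵀ Ω W = Ω`. Since `U(S)` is transitive on the
unit sphere of `ℂ^S`, some such `W` has `W e_j = Oᵀ e_j`; then `O W` is orthogonal with `j`-th
column `e_j`, so its `j`-th row is `e_jᵀ` as well. -/

theorem Matrix.row_eq_of_col_eq_of_transpose_mul_self_eq_one {n R : Type*} [Fintype n]
    [DecidableEq n] [Semiring R] {M : Matrix n n R} (hM : Mᵀ * M = 1) {j : n}
    (hcol : ∀ l, M l j = if l = j then 1 else 0) (l : n) : M j l = if j = l then 1 else 0 := by
  rw [← one_apply, ← hM, mul_apply]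
  simp [hcol]

theorem exists_mem_unitaryGroup_col_eq {𝕜 ι : Type*} [RCLike 𝕜] [Fintype ι] [DecidableEq ι]
    (z : EuclideanSpace 𝕜 ι) (hz : ‖z‖ = 1) (l : ι) :
    ∃ U ∈ unitaryGroup ι 𝕜, ∀ k, U k l = z k := by
  have hv : Orthonormal 𝕜 (({l} : Set ι).domRestrict fun _ => z) :=
    ⟨fun _ => hz, fun a b hab => absurd (Subsingleton.elim a b) hab⟩
  obtain ⟨b, hb⟩ := hv.exists_orthonormalBasis_extension_of_card_eq (by simp)
  exact ⟨_, (EuclideanSpace.basisFun ι 𝕜).toMatrix_orthonormalBasis_mem_unitary b,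
    fun k => by simp [Module.Basis.toMatrix_apply, hb l rfl]⟩

section Realify

variable {ι : Type*} [Fintype ι] [DecidableEq ι]

noncomputable def realify : Matrix ι ι ℂ →ₐ[ℝ] Matrix (ι × Fin 2) (ι × Fin 2) ℝ :=
  (compAlgEquiv ι (Fin 2) ℝ ℝ).toAlgHom.comp
    (Algebra.leftMulMatrix Complex.basisOneI).mapMatrix

theorem realify_apply (M : Matrix ι ι ℂ) (k l : ι) (a c : Fin 2) :
    realify M (k, a) (l, c) = Algebra.leftMulMatrix Complex.basisOneI (M k l) a c := rfl

theorem realify_conjTranspose (M : Matrix ι ι ℂ) : realify Mᴴ = (realify M)ᵀ := by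
  ext ⟨k, a⟩ ⟨l, c⟩
  simp only [transpose_apply, realify_apply, conjTranspose_apply, Algebra.leftMulMatrix_complex]
  fin_cases a <;> fin_cases c <;> simp

end Realify

section Modes

variable {S : ℕ}

def modeEquiv (S : ℕ) : Fin S × Fin 2 ≃ Fin (2 * S) :=
  finProdFinEquiv.trans (finCongr (mul_comm S 2))

@[simp] theorem modeEquiv_val (p : Fin S × Fin 2) : (modeEquiv S p : ℕ) = p.2 + 2 * p.1 := rfl

noncomputable def realifyModes (S : ℕ) :
    Matrix (Fin S) (Fin S) ℂ →ₐ[ℝ] Matrix (Fin (2 * S)) (Fin (2 * S)) ℝ :=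
  (reindexAlgEquiv ℝ ℝ (modeEquiv S)).toAlgHom.comp realify

theorem realifyModes_apply (M : Matrix (Fin S) (Fin S) ℂ) (k l : Fin S) (a c : Fin 2) :
    realifyModes S M (modeEquiv S (k, a)) (modeEquiv S (l, c)) =
      Algebra.leftMulMatrix Complex.basisOneI (M k l) a c := by
  simp [realifyModes, realify_apply]

theorem realifyModes_conjTranspose (M : Matrix (Fin S) (Fin S) ℂ) :
    realifyModes S Mᴴ = (realifyModes S M)ᵀ := by
  simp [realifyModes, realify_conjTranspose]

theorem realifyModes_neg_I_smul_one :
    realifyModes S ((-Complex.I) • 1) = Omega S := by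
  ext i j
  obtain ⟨⟨k, a⟩, rfl⟩ := (modeEquiv S).surjective i
  obtain ⟨⟨l, c⟩, rfl⟩ := (modeEquiv S).surjective j
  rw [realifyModes_apply, Omega, of_apply, Matrix.smul_apply, one_apply,
    Algebra.leftMulMatrix_complex]
  by_cases hkl : k = l
  · subst hkl
    fin_cases a <;> fin_cases c <;> simp <;> omega
  · have hkl' : (k : ℕ) ≠ l := Fin.val_ne_of_ne hkl
    have h₁ : 2 * (k : ℕ) + 1 ≠ 2 * l := by omega
    have h₂ : 2 * (l : ℕ) + 1 ≠ 2 * k := by omega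
    fin_cases a <;> fin_cases c <;> simp [hkl, h₁, h₂] <;> omega

theorem isOrthoSymp_realifyModes {U : Matrix (Fin S) (Fin S) ℂ}
    (hU : U ∈ unitaryGroup (Fin S) ℂ) :
    IsOrthoSymp S (realifyModes S U) := by
  rw [mem_unitaryGroup_iff', star_eq_conjTranspose] at hU
  have hΩ : Uᴴ * ((-Complex.I) • 1) * U = (-Complex.I) • 1 := by
    rw [Matrix.mul_smul, mul_one, Matrix.smul_mul, hU]
  refine ⟨?_, ?_⟩
  · rw [← realifyModes_conjTranspose, ← map_mul, hU, map_one]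
  · rw [← realifyModes_conjTranspose, ← realifyModes_neg_I_smul_one, ← map_mul, ← map_mul,
      hΩ]

theorem exists_isOrthoSymp_col_eq (v : Fin (2 * S) → ℝ) (hv : ∑ i, v i ^ 2 = 1)
    (j : Fin (2 * S)) : ∃ W, IsOrthoSymp S W ∧ ∀ i, W i j = v i := by
  obtain ⟨⟨l, c⟩, rfl⟩ := (modeEquiv S).surjective j
  set b := Complex.basisOneI
  let w (k : Fin S) : ℂ := ⟨v (modeEquiv S (k, 0)), v (modeEquiv S (k, 1))⟩
  -- Column `c` of the block of `ζ : ℂ` lists the coordinates of `ζ * b c`, hence the `/ b c`.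
  let z : EuclideanSpace ℂ (Fin S) := WithLp.toLp 2 fun k => w k / b c
  have hbc : ‖b c‖ = 1 := by fin_cases c <;> simp [b]
  have hz : ‖z‖ = 1 := by
    rw [← pow_eq_one_iff_of_nonneg (norm_nonneg z) two_ne_zero, EuclideanSpace.norm_sq_eq, ← hv,
      ← (modeEquiv S).sum_comp, Fintype.sum_prod_type]
    simp [z, w, hbc, Complex.sq_norm, Complex.normSq_mk, Fin.sum_univ_two, ← sq]
  obtain ⟨U, hU, hUl⟩ := exists_mem_unitaryGroup_col_eq z hz l
  refine ⟨realifyModes S U, isOrthoSymp_realifyModes hU, fun i => ?_⟩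
  obtain ⟨⟨k, a⟩, rfl⟩ := (modeEquiv S).surjective i
  rw [realifyModes_apply, Algebra.leftMulMatrix_eq_repr_mul, hUl, div_mul_cancel₀ _ (b.ne_zero c)]
  fin_cases a <;> simp [w]

end Modes

/-- For any `2S × 2S` real orthogonal `O` and any standard basis
vector `e_j`, there is an orthogonal symplectic `W` such that `O * W` acts trivially
on `e_j`: column `j` of `O * W` equals `e_j` and row `j` of `O * W` equals `e_jᵀ`. -/
theorem exists_ortho_symp_fixes_basis_vector (S : ℕ)
    (O : Matrix (Fin (2 * S)) (Fin (2 * S)) ℝ) (hO : Oᵀ * O = 1)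
    (j : Fin (2 * S)) :
    ∃ W : Matrix (Fin (2 * S)) (Fin (2 * S)) ℝ,
      IsOrthoSymp S W ∧
      (∀ l : Fin (2 * S), (O * W) l j = if l = j then 1 else 0) ∧
      (∀ l : Fin (2 * S), (O * W) j l = if j = l then 1 else 0) := by
  have hO' : O * Oᵀ = 1 := mul_eq_one_comm.mp hO
  have hrow : ∑ t, O j t ^ 2 = 1 := by
    simpa [mul_apply, sq] using congrFun (congrFun hO' j) j
  obtain ⟨W, hW, hWj⟩ := exists_isOrthoSymp_col_eq (O j) hrow j
  have hcol : ∀ l, (O * W) l j = if l = j then 1 else 0 := fun l => by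
    rw [← one_apply, ← hO']
    simp [mul_apply, hWj]
  have hOW : (O * W)ᵀ * (O * W) = 1 := by
    rw [transpose_mul, Matrix.mul_assoc, ← Matrix.mul_assoc Oᵀ, hO, Matrix.one_mul, hW.1]
  exact ⟨W, hW, hcol, row_eq_of_col_eq_of_transpose_mul_self_eq_one hOW hcol⟩
end

section
/- Let Γ be a 2S×2S quantum covariance matrix with eigenvalues λ₁ ≥ λ₂ ≥ ... ≥ λ_{2S} listed in non-ascending order. Then the diagonal matrix D_Λ whose j-th diagonal 2×2 block is diag(λ_j, λ_{2S+1−j}) for j = 1,...,S is also a quantum covariance matrix; equivalently, λ_j·λ_{2S+1−j} ≥ 1 for every j = 1,...,S. -/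
open Matrix Polynomial
open scoped ComplexOrder

/-- A quantum covariance matrix: real symmetric positive-definite with `Γ + iΩ ⪰ 0`. -/
def IsQuantumCovMatrix (S : ℕ) (Γ : Matrix (Fin (2 * S)) (Fin (2 * S)) ℝ) : Prop :=
  Γ.IsSymm ∧ Γ.PosDef ∧
    (Γ.map (fun x => (x : ℂ)) +
      Complex.I • (Omega S).map (fun x => (x : ℂ))).PosSemidef

/-- The diagonal representative of a non-ascending eigenspectrum `λ₁ ≥ … ≥ λ_{2S}`:
its `j`-th `2 × 2` diagonal block is `diag(λ_j, λ_{2S+1-j})` (in `0`-based indexing,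
block `b` has diagonal `(λ_b, λ_{2S-1-b})`). -/
def diagRep (S : ℕ) (lam : Fin (2 * S) → ℝ) : Matrix (Fin (2 * S)) (Fin (2 * S)) ℝ :=
  Matrix.diagonal fun j =>
    if j.val % 2 = 0 then lam ⟨j.val / 2, by have := j.isLt; omega⟩
    else lam ⟨2 * S - 1 - j.val / 2, by have := j.isLt; omega⟩

/-!
Writing `z = x + i y`, the condition `Γ + iΩ ⪰ 0` for a real symmetric `Γ` says exactly that
`2 xᵀΩy ≤ xᵀΓx + yᵀΓy` for all real `x, y`; replacing `y` by `t y` and taking the discriminant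
gives the uncertainty relation `(xᵀΩy)² ≤ (xᵀΓx)(yᵀΓy)`.

Eigenvectors of `Γ` with eigenvalue `≤ λ_j` span a space of dimension `≥ 2S + 1 - j`, and those with
eigenvalue `≤ λ_{2S+1-j}` one of dimension `≥ j`, so some `x ≠ 0` lies in the first while `Ωx`
lies in the second. As `Ω` is orthogonal with `Ω² = -1`, the uncertainty relation for `x` and
`Ωx` reads `‖x‖⁴ ≤ λ_j λ_{2S+1-j} ‖x‖⁴`.

Conversely, for a positive diagonal `D` the real criterion splits into the `2 × 2` blocks, where
it is `2uv ≤ a u² + b v²` with `ab ≥ 1`.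
-/

section Omega

variable {S : ℕ}

def symplecticPartner (k : Fin (2 * S)) : Fin (2 * S) :=
  if h : k.val % 2 = 0 then ⟨k.val + 1, by omega⟩ else ⟨k.val - 1, by omega⟩

def symplecticSign (k : Fin (2 * S)) : ℝ := if k.val % 2 = 0 then 1 else -1

lemma symplecticPartner_involutive : Function.Involutive (symplecticPartner (S := S)) := by
  intro k
  unfold symplecticPartner
  split_ifs with h1 h2 h2 <;> ext <;> simp only at h2 ⊢ <;> omega

lemma symplecticSign_partner (k : Fin (2 * S)) :
    symplecticSign (symplecticPartner k) = -symplecticSign k := by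
  unfold symplecticSign symplecticPartner
  split_ifs <;> simp only at * <;> first | omega | norm_num

lemma symplecticPartner_eq_comm {k l : Fin (2 * S)} :
    k = symplecticPartner l ↔ l = symplecticPartner k :=
  eq_comm.trans symplecticPartner_involutive.eq_iff

lemma symplecticSign_mul_self (k : Fin (2 * S)) : symplecticSign k * symplecticSign k = 1 := by
  unfold symplecticSign; split_ifs <;> norm_num

lemma Omega_apply (k l : Fin (2 * S)) :
    Omega S k l = if l = symplecticPartner k then symplecticSign k else 0 := by
  unfold Omega symplecticPartner symplecticSign
  simp only [of_apply, Fin.ext_iff]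
  split_ifs <;> simp_all <;> omega

lemma Omega_transpose : (Omega S)ᵀ = -Omega S := by
  ext k l
  rw [transpose_apply, neg_apply, Omega_apply, Omega_apply]
  by_cases h : l = symplecticPartner k
  · rw [if_pos (symplecticPartner_eq_comm.mpr h), if_pos h, h, symplecticSign_partner]
  · rw [if_neg (mt symplecticPartner_eq_comm.mp h), if_neg h, neg_zero]

lemma Omega_mulVec_apply (x : Fin (2 * S) → ℝ) (k : Fin (2 * S)) :
    (Omega S *ᵥ x) k = symplecticSign k * x (symplecticPartner k) := by
  simp [mulVec, dotProduct, Omega_apply, ite_mul]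

lemma Omega_mulVec_Omega_mulVec (x : Fin (2 * S) → ℝ) : Omega S *ᵥ (Omega S *ᵥ x) = -x := by
  ext k
  rw [Omega_mulVec_apply, Omega_mulVec_apply, symplecticSign_partner,
    symplecticPartner_involutive k, Pi.neg_apply]
  linear_combination (-x k) * symplecticSign_mul_self k

lemma dotProduct_Omega_mulVec (x y : Fin (2 * S) → ℝ) :
    x ⬝ᵥ (Omega S *ᵥ y) = ∑ k, symplecticSign k * x k * y (symplecticPartner k) := by
  simp only [dotProduct, Omega_mulVec_apply]
  exact Finset.sum_congr rfl fun k _ => by ring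

lemma Omega_mulVec_dotProduct_Omega_mulVec (x y : Fin (2 * S) → ℝ) :
    (Omega S *ᵥ x) ⬝ᵥ (Omega S *ᵥ y) = x ⬝ᵥ y := by
  rw [dotProduct_mulVec, ← mulVec_transpose, Omega_transpose, neg_mulVec,
    Omega_mulVec_Omega_mulVec, neg_neg, dotProduct_comm]

end Omega

section RealForm

variable {ι : Type*} [Fintype ι]

lemma ofReal_dotProduct_map_mulVec (A : Matrix ι ι ℝ) (u v : ι → ℝ) :
    (fun i => (u i : ℂ)) ⬝ᵥ (A.map (↑) *ᵥ fun i => (v i : ℂ)) = ((u ⬝ᵥ A *ᵥ v : ℝ) : ℂ) := by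
  simp only [dotProduct, mulVec, map_apply]
  push_cast
  rfl

lemma star_dotProduct_mulVec_ofReal_add_I_smul {Γ J : Matrix ι ι ℝ} (hΓ : Γ.IsSymm)
    (hJ : Jᵀ = -J) (x y : ι → ℝ) :
    star (fun i => (x i : ℂ) + Complex.I * y i) ⬝ᵥ
        ((Γ.map (↑) + Complex.I • J.map (↑)) *ᵥ fun i => (x i : ℂ) + Complex.I * y i) =
      ((x ⬝ᵥ Γ *ᵥ x + y ⬝ᵥ Γ *ᵥ y - 2 * (x ⬝ᵥ J *ᵥ y) : ℝ) : ℂ) := by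
  have hz : (fun i => (x i : ℂ) + Complex.I * y i) =
      (fun i => (x i : ℂ)) + Complex.I • fun i => (y i : ℂ) := rfl
  have hz' : star (fun i => (x i : ℂ) + Complex.I * y i) =
      (fun i => (x i : ℂ)) - Complex.I • fun i => (y i : ℂ) := by
    ext i; simp [Complex.conj_ofReal, sub_eq_add_neg]
  have hΓyx : y ⬝ᵥ Γ *ᵥ x = x ⬝ᵥ Γ *ᵥ y := by
    rw [dotProduct_mulVec, ← mulVec_transpose, hΓ.eq, dotProduct_comm]
  have hJ_skew : ∀ u v : ι → ℝ, v ⬝ᵥ J *ᵥ u = -(u ⬝ᵥ J *ᵥ v) := by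
    intro u v
    rw [dotProduct_mulVec, ← mulVec_transpose, hJ, neg_mulVec, neg_dotProduct, dotProduct_comm]
  have hJxx : x ⬝ᵥ J *ᵥ x = 0 := by linarith [hJ_skew x x]
  have hJyy : y ⬝ᵥ J *ᵥ y = 0 := by linarith [hJ_skew y y]
  rw [hz', hz]
  simp only [add_mulVec, mulVec_add, mulVec_smul, smul_mulVec, dotProduct_add, sub_dotProduct,
    dotProduct_smul, smul_dotProduct, ofReal_dotProduct_map_mulVec, smul_eq_mul, hΓyx, hJxx, hJyy,
    hJ_skew x y]
  push_cast
  linear_combination (2 * ↑(x ⬝ᵥ J *ᵥ y) - ↑(y ⬝ᵥ Γ *ᵥ y) : ℂ) * Complex.I_sq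


lemma posSemidef_map_ofReal_add_I_smul_iff {Γ J : Matrix ι ι ℝ} (hΓ : Γ.IsSymm) (hJ : Jᵀ = -J) :
    (Γ.map (fun x => (x : ℂ)) + Complex.I • J.map (fun x => (x : ℂ))).PosSemidef ↔
      ∀ x y : ι → ℝ, 2 * (x ⬝ᵥ J *ᵥ y) ≤ x ⬝ᵥ Γ *ᵥ x + y ⬝ᵥ Γ *ᵥ y := by
  constructor
  · intro h x y
    have := h.dotProduct_mulVec_nonneg fun i => (x i : ℂ) + Complex.I * y i
    rw [star_dotProduct_mulVec_ofReal_add_I_smul hΓ hJ, Complex.zero_le_real] at this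
    linarith
  · intro h
    refine PosSemidef.of_dotProduct_mulVec_nonneg ?_ fun z => ?_
    · ext i j
      have hJji : J j i = -J i j := by simpa using congrFun (congrFun hJ i) j
      simp [hΓ.apply i j, hJji]
    · have hz : z = fun i => ((z i).re : ℂ) + Complex.I * (z i).im := by
        ext i; rw [mul_comm, Complex.re_add_im]
      rw [hz, star_dotProduct_mulVec_ofReal_add_I_smul hΓ hJ, Complex.zero_le_real]
      linarith [h (fun i => (z i).re) (fun i => (z i).im)]

end RealForm

section Spectral

variable {ι : Type*} [Fintype ι]

lemma sq_dotProduct_mulVec_le_mul {K : Type*} [Field K] [LinearOrder K] [IsStrictOrderedRing K]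
    {Γ J : Matrix ι ι K} (h : ∀ x y : ι → K, 2 * (x ⬝ᵥ J *ᵥ y) ≤ x ⬝ᵥ Γ *ᵥ x + y ⬝ᵥ Γ *ᵥ y)
    (x y : ι → K) :
    (x ⬝ᵥ J *ᵥ y) ^ 2 ≤ (x ⬝ᵥ Γ *ᵥ x) * (y ⬝ᵥ Γ *ᵥ y) := by
  have hquad : ∀ t : K,
      0 ≤ (y ⬝ᵥ Γ *ᵥ y) * (t * t) + (-2 * (x ⬝ᵥ J *ᵥ y)) * t + x ⬝ᵥ Γ *ᵥ x := by
    intro t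
    have := h x (t • y)
    simp only [mulVec_smul, dotProduct_smul, smul_dotProduct, smul_eq_mul] at this
    linarith
  have := discrim_le_zero hquad
  rw [discrim] at this
  linarith

lemma dotProduct_mulVec_eq_star_mulVec_dotProduct {R : Type*} [CommSemiring R] [StarRing R]
    [TrivialStar R] (U : Matrix ι ι R) (u v : ι → R) :
    u ⬝ᵥ U *ᵥ v = (star U *ᵥ u) ⬝ᵥ v := by
  rw [dotProduct_mulVec, star_eq_conjTranspose, conjTranspose_eq_transpose_of_trivial,
    mulVec_transpose]

variable [DecidableEq ι]

lemma Matrix.IsHermitian.dotProduct_mulVec_le_of_eigenvalues {A : Matrix ι ι ℝ}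
    (hA : A.IsHermitian) {c : ℝ} {x : ι → ℝ}
    (hx : ∀ k, c < hA.eigenvalues k → (star (hA.eigenvectorUnitary : Matrix ι ι ℝ) *ᵥ x) k = 0) :
    x ⬝ᵥ A *ᵥ x ≤ c * (x ⬝ᵥ x) := by
  set U := (hA.eigenvectorUnitary : Matrix ι ι ℝ)
  set w := star U *ᵥ x
  have hxw : x = U *ᵥ w := by
    rw [mulVec_mulVec, Unitary.mul_star_self_of_mem hA.eigenvectorUnitary.2, one_mulVec]
  have hA_eq : A = U * diagonal hA.eigenvalues * star U := by
    simpa [Unitary.conjStarAlgAut_apply] using hA.spectral_theorem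
  have hquad : x ⬝ᵥ A *ᵥ x = ∑ k, hA.eigenvalues k * w k ^ 2 := by
    conv_lhs =>
      rw [hA_eq, ← mulVec_mulVec, ← mulVec_mulVec, dotProduct_mulVec_eq_star_mulVec_dotProduct]
    simp only [dotProduct, mulVec_diagonal]
    exact Finset.sum_congr rfl fun k _ => by ring
  have hnorm : x ⬝ᵥ x = ∑ k, w k ^ 2 := by
    nth_rewrite 2 [hxw]
    rw [dotProduct_mulVec_eq_star_mulVec_dotProduct]
    exact Finset.sum_congr rfl fun k _ => by ring
  rw [hquad, hnorm, Finset.mul_sum]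
  refine Finset.sum_le_sum fun k _ => ?_
  by_cases hk : c < hA.eigenvalues k
  · simp [w, hx k hk]
  · exact mul_le_mul_of_nonneg_right (not_lt.mp hk) (sq_nonneg _)

end Spectral

lemma exists_ne_zero_vanishing_and_mulVec_vanishing {ι K : Type*} [Fintype ι] [Field K]
    (P Q : Finset ι) (T : Matrix ι ι K) (h : P.card + Q.card < Fintype.card ι) :
    ∃ w : ι → K, w ≠ 0 ∧ (∀ k ∈ P, w k = 0) ∧ ∀ k ∈ Q, (T *ᵥ w) k = 0 := by
  let F : (ι → K) →ₗ[K] (P → K) × (Q → K) :=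
    (LinearMap.pi fun k : P => LinearMap.proj (k : ι)).prod
      (LinearMap.pi fun k : Q => (LinearMap.proj (k : ι)).comp T.mulVecLin)
  have hdim : Module.finrank K ((P → K) × (Q → K)) < Module.finrank K (ι → K) := by
    simpa [Module.finrank_prod] using h
  obtain ⟨w, hw, hw0⟩ := (Submodule.ne_bot_iff _).mp (LinearMap.ker_ne_bot_of_finrank_lt hdim)
  refine ⟨w, hw0, fun k hk => ?_, fun k hk => ?_⟩
  · simpa [F] using congrFun (congrArg Prod.fst (LinearMap.mem_ker (f := F) |>.mp hw)) ⟨k, hk⟩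
  · simpa [F] using congrFun (congrArg Prod.snd (LinearMap.mem_ker (f := F) |>.mp hw)) ⟨k, hk⟩

section Charpoly

variable {ι : Type*} [Fintype ι]

lemma card_filter_eq_of_map_eq {α : Type*} {f g : ι → α} (p : α → Prop) [DecidablePred p]
    (h : Finset.univ.val.map f = Finset.univ.val.map g) :
    (Finset.univ.filter fun i => p (f i)).card = (Finset.univ.filter fun i => p (g i)).card := by
  have key : ∀ f : ι → α, (Finset.univ.filter fun i => p (f i)).card =
      Multiset.card ((Finset.univ.val.map f).filter p) := by
    intro f
    rw [Multiset.filter_map, Multiset.card_map]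
    rfl
  rw [key f, key g, h]

variable [DecidableEq ι]

lemma Matrix.IsHermitian.map_eigenvalues_eq_of_charpoly_eq {A : Matrix ι ι ℝ} (hA : A.IsHermitian)
    {lam : ι → ℝ} (h : A.charpoly = ∏ j, (X - C (lam j))) :
    Finset.univ.val.map lam = Finset.univ.val.map hA.eigenvalues := by
  have hroots := hA.roots_charpoly_eq_eigenvalues
  rw [h, roots_prod _ _ (Finset.prod_ne_zero_iff.mpr fun j _ => X_sub_C_ne_zero (lam j))] at hroots
  simpa using hroots

end Charpoly

theorem Matrix.IsHermitian.one_le_mul_of_card_lt {S : ℕ}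
    {Γ : Matrix (Fin (2 * S)) (Fin (2 * S)) ℝ} (hH : Γ.IsHermitian)
    (hpsd : (Γ.map (fun x => (x : ℂ)) +
      Complex.I • (Omega S).map (fun x => (x : ℂ))).PosSemidef) {a b : ℝ}
    (h : (Finset.univ.filter fun k => a < hH.eigenvalues k).card +
      (Finset.univ.filter fun k => b < hH.eigenvalues k).card < 2 * S) :
    1 ≤ a * b := by
  have hreal := (posSemidef_map_ofReal_add_I_smul_iff (isHermitian_iff_isSymm.mp hH)
    Omega_transpose).mp hpsd
  set U := (hH.eigenvectorUnitary : Matrix (Fin (2 * S)) (Fin (2 * S)) ℝ)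
  obtain ⟨w, hw0, hwa, hwb⟩ := exists_ne_zero_vanishing_and_mulVec_vanishing _ _
    (star U * Omega S * U) (by simpa using h)
  set x := U *ᵥ w
  set y := Omega S *ᵥ x
  have hUx : star U *ᵥ x = w := by
    rw [mulVec_mulVec, Unitary.star_mul_self_of_mem hH.eigenvectorUnitary.2, one_mulVec]
  have hUy : star U *ᵥ y = (star U * Omega S * U) *ᵥ w := by
    simp only [y, x, mulVec_mulVec, mul_assoc]
  have hxa : x ⬝ᵥ Γ *ᵥ x ≤ a * (x ⬝ᵥ x) :=
    hH.dotProduct_mulVec_le_of_eigenvalues fun k hk => by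
      rw [hUx]; exact hwa k (by simpa using hk)
  have hyb : y ⬝ᵥ Γ *ᵥ y ≤ b * (x ⬝ᵥ x) := by
    rw [← Omega_mulVec_dotProduct_Omega_mulVec x x]
    exact hH.dotProduct_mulVec_le_of_eigenvalues fun k hk => by
      rw [hUy]; exact hwb k (by simpa using hk)
  have hx : 0 < x ⬝ᵥ x := by
    refine lt_of_le_of_ne (Finset.sum_nonneg fun k _ => mul_self_nonneg (x k)) fun h0 => hw0 ?_
    rw [← hUx, dotProduct_self_eq_zero.mp h0.symm, mulVec_zero]
  have hcross : x ⬝ᵥ Omega S *ᵥ y = -(x ⬝ᵥ x) := by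
    rw [Omega_mulVec_Omega_mulVec, dotProduct_neg]
  have huncertainty := sq_dotProduct_mulVec_le_mul hreal x y
  rw [hcross, neg_sq] at huncertainty
  have hΓx : 0 ≤ x ⬝ᵥ Γ *ᵥ x := by simpa using hreal x 0
  have hΓy : 0 ≤ y ⬝ᵥ Γ *ᵥ y := by simpa using hreal y 0
  have hquartic : (x ⬝ᵥ x) ^ 2 ≤ a * b * (x ⬝ᵥ x) ^ 2 := by
    calc (x ⬝ᵥ x) ^ 2 ≤ (x ⬝ᵥ Γ *ᵥ x) * (y ⬝ᵥ Γ *ᵥ y) := huncertainty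
      _ ≤ (a * (x ⬝ᵥ x)) * (b * (x ⬝ᵥ x)) := mul_le_mul hxa hyb hΓy (hΓx.trans hxa)
      _ = a * b * (x ⬝ᵥ x) ^ 2 := by ring
  exact le_of_mul_le_mul_right (by rwa [one_mul]) (pow_pos hx 2)

lemma Matrix.PosDef.pos_of_charpoly_eq {ι : Type*} [Fintype ι] [DecidableEq ι]
    {A : Matrix ι ι ℝ} (hA : A.PosDef) {lam : ι → ℝ} (h : A.charpoly = ∏ j, (X - C (lam j)))
    (i : ι) : 0 < lam i := by
  have hmem : lam i ∈ Finset.univ.val.map hA.isHermitian.eigenvalues := by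
    rw [← hA.isHermitian.map_eigenvalues_eq_of_charpoly_eq h]
    exact Multiset.mem_map_of_mem _ (Finset.mem_univ i)
  obtain ⟨k, -, hk⟩ := Multiset.mem_map.mp hmem
  exact hk ▸ hA.eigenvalues_pos k

theorem IsQuantumCovMatrix.one_le_mul_of_antitone {S : ℕ}
    {Γ : Matrix (Fin (2 * S)) (Fin (2 * S)) ℝ} (hΓ : IsQuantumCovMatrix S Γ)
    {lam : Fin (2 * S) → ℝ} (hmono : Antitone lam) (hchar : Γ.charpoly = ∏ j, (X - C (lam j)))
    {i j : Fin (2 * S)} (hij : i.val + j.val < 2 * S) :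
    1 ≤ lam i * lam j := by
  have hH := hΓ.2.1.isHermitian
  have hcard : ∀ i : Fin (2 * S),
      (Finset.univ.filter fun k => lam i < hH.eigenvalues k).card ≤ i.val := by
    intro i
    rw [← card_filter_eq_of_map_eq (lam i < ·) (hH.map_eigenvalues_eq_of_charpoly_eq hchar)]
    calc _ ≤ (Finset.Iio i).card := Finset.card_le_card fun k hk => by
          simpa using hmono.reflect_lt (Finset.mem_filter.mp hk).2
      _ = i.val := Fin.card_Iio i
  exact hH.one_le_mul_of_card_lt hΓ.2.2 (by linarith [hcard i, hcard j])

lemma two_mul_le_mul_sq_add_mul_sq {K : Type*} [Field K] [LinearOrder K] [IsStrictOrderedRing K]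
    {a b : K} (ha : 0 ≤ a) (hab : 1 ≤ a * b) (u v : K) :
    2 * u * v ≤ a * u ^ 2 + b * v ^ 2 := by
  have ha' : 0 < a := lt_of_le_of_ne ha fun h => by simp [← h] at hab; linarith
  -- `a * (a u² + b v² - 2uv) = (a u - v)² + (a b - 1) v²`
  nlinarith [sq_nonneg (a * u - v), mul_nonneg (sub_nonneg.mpr hab) (sq_nonneg v)]

lemma isQuantumCovMatrix_diagonal {S : ℕ} {d : Fin (2 * S) → ℝ} (hpos : ∀ k, 0 < d k)
    (hpair : ∀ k, 1 ≤ d k * d (symplecticPartner k)) :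
    IsQuantumCovMatrix S (diagonal d) := by
  refine ⟨isSymm_diagonal d, posDef_diagonal_iff.mpr hpos,
    (posSemidef_map_ofReal_add_I_smul_iff (isSymm_diagonal d) Omega_transpose).mpr fun x y => ?_⟩
  have hdiag : ∀ u : Fin (2 * S) → ℝ, u ⬝ᵥ diagonal d *ᵥ u = ∑ k, d k * u k ^ 2 := fun u =>
    Finset.sum_congr rfl fun k _ => by rw [mulVec_diagonal]; ring
  have hreindex : ∑ k, d k * y k ^ 2 =
      ∑ k, d (symplecticPartner k) * y (symplecticPartner k) ^ 2 :=
    (Equiv.sum_comp (symplecticPartner_involutive.toPerm _) fun k => d k * y k ^ 2).symm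
  rw [dotProduct_Omega_mulVec, hdiag, hdiag, hreindex, Finset.mul_sum, ← Finset.sum_add_distrib]
  refine Finset.sum_le_sum fun k _ => ?_
  have := two_mul_le_mul_sq_add_mul_sq (hpos k).le (hpair k)
    (symplecticSign k * x k) (y (symplecticPartner k))
  rw [mul_pow, sq (symplecticSign k), symplecticSign_mul_self, one_mul] at this
  linarith

lemma isQuantumCovMatrix_diagRep {S : ℕ} {lam : Fin (2 * S) → ℝ} (hpos : ∀ i, 0 < lam i)
    (hpair : ∀ j : Fin S, 1 ≤ lam ⟨j.val, by omega⟩ * lam ⟨2 * S - 1 - j.val, by omega⟩) :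
    IsQuantumCovMatrix S (diagRep S lam) := by
  refine isQuantumCovMatrix_diagonal (fun k => by split_ifs <;> exact hpos _)
    fun k => ?_
  have hk := k.isLt
  have := hpair ⟨k.val / 2, by omega⟩
  unfold symplecticPartner
  split_ifs with hk_even hpk_even hpk_even <;> simp only at hpk_even ⊢
  · omega
  · convert this using 4
    simp only
    omega
  · rw [mul_comm]
    convert this using 4
    simp only
    omega
  · omega

/-- If `Γ` is a quantum covariance matrix with eigenvalues
`λ₁ ≥ … ≥ λ_{2S}` (non-ascending), then the diagonal representative `D_Λ`, whose
`j`-th `2 × 2` block is `diag(λ_j, λ_{2S+1-j})`, is also a quantum covariance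
matrix; equivalently, `λ_j · λ_{2S+1-j} ≥ 1` for every `j`. -/
theorem diagonal_representative_is_quantum_cov (S : ℕ)
    (Γ : Matrix (Fin (2 * S)) (Fin (2 * S)) ℝ)
    (hΓ : IsQuantumCovMatrix S Γ)
    (lam : Fin (2 * S) → ℝ)
    (hmono : ∀ i j : Fin (2 * S), i ≤ j → lam j ≤ lam i)
    (hchar : Γ.charpoly = ∏ j : Fin (2 * S), (X - C (lam j))) :
    IsQuantumCovMatrix S (diagRep S lam) ∧
    ∀ j : Fin S,
      1 ≤ lam ⟨j.val, by have := j.isLt; omega⟩ *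
            lam ⟨2 * S - 1 - j.val, by have := j.isLt; omega⟩ := by
  have hpair : ∀ j : Fin S, 1 ≤ lam ⟨j.val, by omega⟩ * lam ⟨2 * S - 1 - j.val, by omega⟩ :=
    fun j => hΓ.one_le_mul_of_antitone hmono hchar (by simp only; omega)
  exact ⟨isQuantumCovMatrix_diagRep (hΓ.2.1.pos_of_charpoly_eq hchar) hpair, hpair⟩
end
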